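/- arXiv:2208.07413 — 6 statements merged into one kernel-verified Lean document; each statement's English description precedes it below -/
import Mathlib

section
/- The centralizer in M_n(R) of the ring of G-circulant matrices (with respect to a listing {g_i}) equals the ring of G^{op}-circulant matrices with entries in the center Z(R) of R (with respect to the corresponding listing {g_i^{op}}). -/
/-!
Scalar matrices and the permutation matrices of right multiplications are `G`-circulant;
commuting with the former forces central entries, commuting with the latter forces invariance
under right multiplication. Conversely, a `G`-circulant `A` and a right-invariant `B` depend only
on `x⁻¹ * y` and `x * y⁻¹` respectively, so when `B` has central entries the substitution
`z ↦ y * z⁻¹ * x` matches the summands of `(A * B) x y` and `(B * A) x y`.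
-/

/-- A matrix over `R`, indexed by a finite group `G`, is `G`-circulant if
`A (g*x) (g*y) = A x y` for all `g, x, y`. -/
def GCirculant {G R : Type*} [Group G] (A : Matrix G G R) : Prop :=
  ∀ g x y : G, A (g * x) (g * y) = A x y

namespace GCirculant

variable {G R : Type*} [Group G]

theorem apply_eq_one_inv_mul {A : Matrix G G R} (hA : GCirculant A) (x y : G) :
    A x y = A 1 (x⁻¹ * y) := by
  simpa using (hA x⁻¹ x y).symm

theorem diagonal_const [DecidableEq G] [Zero R] (r : R) :
    GCirculant (Matrix.diagonal fun _ : G => r) := by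
  intro g x y
  simp only [Matrix.diagonal_apply, mul_right_inj]

theorem permMatrix_mulRight [DecidableEq G] [Zero R] [One R] (g : G) :
    GCirculant ((Equiv.mulRight g).permMatrix R) := by
  intro a x y
  simp only [PEquiv.toMatrix_toPEquiv_eq, Matrix.submatrix_apply, Matrix.one_apply,
    Equiv.coe_mulRight, id, mul_assoc, mul_right_inj]

end GCirculant

section RightInvariant

variable {G R : Type*} [Group G]

theorem Matrix.apply_eq_mul_inv_one_of_right_invariant {B : Matrix G G R}
    (hB : ∀ g x y : G, B (x * g) (y * g) = B x y) (x y : G) : B x y = B (x * y⁻¹) 1 := by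
  simpa using (hB y⁻¹ x y).symm

theorem GCirculant.commute_of_right_invariant [Fintype G] [Ring R] {A B : Matrix G G R}
    (hA : GCirculant A) (hB : ∀ g x y : G, B (x * g) (y * g) = B x y)
    (hcenter : ∀ x y : G, B x y ∈ Set.center R) : A * B = B * A := by
  ext x y
  simp only [Matrix.mul_apply]
  refine Fintype.sum_equiv ((Equiv.inv G).trans ((Equiv.mulLeft y).trans (Equiv.mulRight x)))
    _ _ fun z => ?_
  have hleft : x * (y * z⁻¹ * x)⁻¹ = z * y⁻¹ := by group
  have hright : (y * z⁻¹ * x)⁻¹ * y = x⁻¹ * z := by group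
  simp only [Equiv.trans_apply, Equiv.inv_apply, Equiv.coe_mulLeft, Equiv.coe_mulRight]
  rw [hA.apply_eq_one_inv_mul x, hA.apply_eq_one_inv_mul (y * z⁻¹ * x),
    Matrix.apply_eq_mul_inv_one_of_right_invariant hB z,
    Matrix.apply_eq_mul_inv_one_of_right_invariant hB x, hleft, hright]
  exact Semigroup.mem_center_iff.mp (hcenter _ _) _

end RightInvariant

theorem centralizer_gcirculant_general (G R : Type*) [Group G] [Fintype G]
    [Ring R] :
    {B : Matrix G G R | ∀ A : Matrix G G R, GCirculant A → A * B = B * A} =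
      {B : Matrix G G R |
        (∀ g x y : G, B (x * g) (y * g) = B x y) ∧
        ∀ x y : G, B x y ∈ Set.center R} := by
  classical
  ext B
  constructor
  · intro hB
    refine ⟨fun g x y => ?_, fun x y => Semigroup.mem_center_iff.mpr fun r => ?_⟩
    · have := congrFun₂ (hB _ (GCirculant.permMatrix_mulRight g)) x (y * g)
      simpa [PEquiv.toMatrix_toPEquiv_mul, PEquiv.mul_toMatrix_toPEquiv] using this
    · simpa using congrFun₂ (hB _ (GCirculant.diagonal_const r)) x y
  · rintro ⟨hB, hcenter⟩ A hA
    exact hA.commute_of_right_invariant hB hcenter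

/-- The centralizer in `M_n(R)` of the ring of `G`-circulant matrices is
exactly the set of `Gᵒᵖ`-circulant matrices (i.e. `B (x*g) (y*g) = B x y`)
with entries in the center of `R`. -/
theorem centralizer_gcirculant (G R : Type*) [Group G] [Fintype G]
    [DecidableEq G] [Ring R] :
    {B : Matrix G G R | ∀ A : Matrix G G R, GCirculant A → A * B = B * A} =
      {B : Matrix G G R |
        (∀ g x y : G, B (x * g) (y * g) = B x y) ∧
        ∀ x y : G, B x y ∈ Set.center R} :=
  centralizer_gcirculant_general G R
end

section
/- Let G_1,...,G_d be finite groups of orders k_1,...,k_d with n = k_1+...+k_d, and R a unital ring. A matrix A in M_n(R), written in d×d block form with blocks A_{ij} of size k_i × k_j, lies in the join ring J_{G_1,...,G_d}(R) (i.e. each diagonal block A_{ii} is G_i-circulant and each off-diagonal block A_{ij} is a constant multiple of the all-ones matrix) if and only if A commutes with diag(P_{g_1},...,P_{g_d}) for every (g_1,...,g_d) ∈ G_1 × ... × G_d, where P_{g_i} is the permutation matrix of left multiplication by g_i on G_i. -/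
/-!
`blockPmat R g` is the permutation matrix of the permutation `⟨i, x⟩ ↦ ⟨i, g i * x⟩` of
`Σ i, G i`, so commuting with it means `A` is invariant under simultaneous relabelling of rows
and columns by `g`. Invariance under the factor `G i` alone is circulance of the block `(i, i)`;
for `i ≠ j` the factors `G i` and `G j` move rows and columns of the block `(i, j)` independently
and transitively, which forces that block to be constant.
-/

/-- A block matrix (indexed by the disjoint union of the groups `G i`) is a
join of `G i`-circulant matrices if each diagonal block is `G i`-circulant and
each off-diagonal block is constant. -/
def IsJoin {d : ℕ} {G : Fin d → Type*} [∀ i, Group (G i)] {R : Type*}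
    (A : Matrix ((i : Fin d) × G i) ((i : Fin d) × G i) R) : Prop :=
  (∀ (i : Fin d) (g x y : G i), A ⟨i, g * x⟩ ⟨i, g * y⟩ = A ⟨i, x⟩ ⟨i, y⟩) ∧
  (∀ (i j : Fin d), i ≠ j → ∀ (x x' : G i) (y y' : G j),
    A ⟨i, x⟩ ⟨j, y⟩ = A ⟨i, x'⟩ ⟨j, y'⟩)

/-- The block-diagonal permutation matrix `diag (P_{g 1}, ..., P_{g d})` given
a tuple `g` of group elements. -/
def blockPmat {d : ℕ} {G : Fin d → Type*} [∀ i, Group (G i)]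
    [∀ i, DecidableEq (G i)] (R : Type*) [Ring R] (g : ∀ i, G i) :
    Matrix ((i : Fin d) × G i) ((i : Fin d) × G i) R :=
  fun p q => if (⟨p.1, g p.1 * p.2⟩ : (i : Fin d) × G i) = q then 1 else 0

open Equiv Matrix

theorem Matrix.permMatrix_mul_eq_mul_permMatrix_iff {n R : Type*} [DecidableEq n] [Fintype n]
    [NonAssocSemiring R] (σ : Perm n) (M : Matrix n n R) :
    σ.permMatrix R * M = M * σ.permMatrix R ↔ M.submatrix σ σ = M := by
  rw [PEquiv.toMatrix_toPEquiv_mul, PEquiv.mul_toMatrix_toPEquiv, ← Matrix.ext_iff,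
    ← Matrix.ext_iff]
  simp only [submatrix_apply, id]
  refine forall_congr' fun i => σ.forall_congr_right.symm.trans ?_
  simp only [symm_apply_apply]

section Join

variable {d : ℕ} {G : Fin d → Type*} [∀ i, Group (G i)]

def sigmaMulLeft (g : ∀ i, G i) : Perm ((i : Fin d) × G i) :=
  sigmaCongrRight fun i => Equiv.mulLeft (g i)

@[simp]
theorem sigmaMulLeft_apply (g : ∀ i, G i) (i : Fin d) (x : G i) :
    sigmaMulLeft g ⟨i, x⟩ = ⟨i, g i * x⟩ :=
  rfl

theorem blockPmat_eq_permMatrix [∀ i, DecidableEq (G i)] (R : Type*) [Ring R] (g : ∀ i, G i) :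
    blockPmat R g = (sigmaMulLeft g).permMatrix R := by
  ext ⟨i, x⟩ q
  simp [blockPmat]

theorem isJoin_iff_forall_submatrix_sigmaMulLeft {R : Type*}
    (A : Matrix ((i : Fin d) × G i) ((i : Fin d) × G i) R) :
    IsJoin A ↔ ∀ g, A.submatrix (sigmaMulLeft g) (sigmaMulLeft g) = A := by
  constructor
  · rintro ⟨hdiag, hoff⟩ g
    ext ⟨i, x⟩ ⟨j, y⟩
    rw [submatrix_apply, sigmaMulLeft_apply, sigmaMulLeft_apply]
    by_cases hij : i = j
    · subst hij
      exact hdiag i (g i) x y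
    · exact hoff i j hij _ _ _ _
  · intro h
    refine ⟨fun i g x y => ?_, fun i j hij x x' y y' => ?_⟩
    · simpa using congr_fun₂ (h (Pi.mulSingle i g)) ⟨i, x⟩ ⟨i, y⟩
    · have hmove :=
        congr_fun₂ (h (Pi.mulSingle i (x' * x⁻¹) * Pi.mulSingle j (y' * y⁻¹))) ⟨i, x⟩ ⟨j, y⟩
      simpa [hij, Ne.symm hij] using hmove.symm

end Join

/-- `A` lies in the join ring iff it commutes with all the block-diagonal
permutation matrices `diag (P_{g 1}, ..., P_{g d})`. -/
theorem isJoin_iff_commutes {d : ℕ} {G : Fin d → Type*} [∀ i, Group (G i)]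
    [∀ i, Fintype (G i)] [∀ i, DecidableEq (G i)] {R : Type*} [Ring R]
    (A : Matrix ((i : Fin d) × G i) ((i : Fin d) × G i) R) :
    IsJoin A ↔ ∀ g : ∀ i, G i, blockPmat R g * A = A * blockPmat R g := by
  simp only [blockPmat_eq_permMatrix, permMatrix_mul_eq_mul_permMatrix_iff,
    isJoin_iff_forall_submatrix_sigmaMulLeft]
end

section
/- The join J_{G_1,...,G_d}(R) of G_i-circulant matrices is a unital subring of M_n(R), where n = |G_1| + ... + |G_d|; in particular it is closed under matrix multiplication. -/
open Finset

/-- `G`-circulant matrices, indexed by `G × G` and written as functions `G → G → R`. -/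
def IsCirculant {G R : Type*} [Group G] (f : G → G → R) : Prop :=
  ∀ g x y, f (g * x) (g * y) = f x y

namespace IsCirculant

variable {G R : Type*} [Group G] {f h : G → G → R}

theorem flip (hf : IsCirculant f) : IsCirculant (_root_.flip f) :=
  fun g x y => hf g y x

variable [Fintype G]

theorem sum_row_eq [AddCommMonoid R] (hf : IsCirculant f) (x x' : G) :
    ∑ z, f x z = ∑ z, f x' z :=
  Fintype.sum_equiv (Equiv.mulLeft (x' * x⁻¹)) _ _ fun z => by
    simpa [mul_assoc] using (hf (x' * x⁻¹) x z).symm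

theorem sum_col_eq [AddCommMonoid R] (hf : IsCirculant f) (y y' : G) :
    ∑ z, f z y = ∑ z, f z y' :=
  hf.flip.sum_row_eq y y'

theorem sum_mul_const_eq [NonUnitalNonAssocSemiring R] (hf : IsCirculant f) {b b' : G → R}
    {c : R} (hb : ∀ z, b z = c) (hb' : ∀ z, b' z = c) (x x' : G) :
    ∑ z, f x z * b z = ∑ z, f x' z * b' z := by
  simp only [hb, hb', ← Finset.sum_mul, hf.sum_row_eq x x']

theorem sum_const_mul_eq [NonUnitalNonAssocSemiring R] (hf : IsCirculant f) {a a' : G → R}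
    {c : R} (ha : ∀ z, a z = c) (ha' : ∀ z, a' z = c) (y y' : G) :
    ∑ z, a z * f z y = ∑ z, a' z * f z y' := by
  simp only [ha, ha', ← Finset.mul_sum, hf.sum_col_eq y y']

theorem sum_mul [NonUnitalNonAssocSemiring R] (hf : IsCirculant f) (hh : IsCirculant h)
    (g x y : G) : ∑ z, f (g * x) z * h z (g * y) = ∑ z, f x z * h z y :=
  calc ∑ z, f (g * x) z * h z (g * y)
      = ∑ z, f (g * x) (g * z) * h (g * z) (g * y) :=
        (Equiv.sum_comp (Equiv.mulLeft g) fun z => f (g * x) z * h z (g * y)).symm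
    _ = ∑ z, f x z * h z y := by simp only [hf g, hh g]

end IsCirculant

namespace IsJoin

variable {d : ℕ} {G : Fin d → Type*} [∀ i, Group (G i)] {R : Type*}
  {A B : Matrix ((i : Fin d) × G i) ((i : Fin d) × G i) R}

theorem isCirculant_diagBlock (hA : IsJoin A) (i : Fin d) :
    IsCirculant fun x y : G i => A ⟨i, x⟩ ⟨i, y⟩ :=
  hA.1 i

theorem zero [Zero R] : IsJoin (0 : Matrix ((i : Fin d) × G i) ((i : Fin d) × G i) R) :=
  ⟨fun _ _ _ _ => rfl, fun _ _ _ _ _ _ _ => rfl⟩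

theorem one [∀ i, DecidableEq (G i)] [Zero R] [One R] :
    IsJoin (1 : Matrix ((i : Fin d) × G i) ((i : Fin d) × G i) R) := by
  refine ⟨fun i g x y => ?_, fun i j hij x x' y y' => ?_⟩
  · simp only [Matrix.one_apply, Sigma.mk.inj_iff, heq_eq_eq, mul_right_inj]
  · have hne : ∀ (x : G i) (y : G j), (⟨i, x⟩ : (i : Fin d) × G i) ≠ ⟨j, y⟩ :=
      fun _ _ h => hij (congrArg Sigma.fst h)
    rw [Matrix.one_apply_ne (hne x y), Matrix.one_apply_ne (hne x' y')]

theorem add [Add R] (hA : IsJoin A) (hB : IsJoin B) : IsJoin (A + B) :=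
  ⟨fun i g x y => by simp only [Matrix.add_apply, hA.1 i g x y, hB.1 i g x y],
    fun i j hij x x' y y' => by
      simp only [Matrix.add_apply, hA.2 i j hij x x' y y', hB.2 i j hij x x' y y']⟩

theorem neg [Neg R] (hA : IsJoin A) : IsJoin (-A) :=
  ⟨fun i g x y => by simp only [Matrix.neg_apply, hA.1 i g x y],
    fun i j hij x x' y y' => by simp only [Matrix.neg_apply, hA.2 i j hij x x' y y']⟩

theorem mul [∀ i, Fintype (G i)] [NonUnitalNonAssocSemiring R] (hA : IsJoin A)
    (hB : IsJoin B) : IsJoin (A * B) := by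
  have hAk := hA.2
  have hBk := hB.2
  simp only [IsJoin, Matrix.mul_apply, Fintype.sum_sigma]
  refine ⟨fun i g x y => sum_congr rfl fun l _ => ?_,
    fun i j hij x x' y y' => sum_congr rfl fun l _ => ?_⟩
  · obtain rfl | hli := eq_or_ne l i
    · exact (hA.isCirculant_diagBlock l).sum_mul (hB.isCirculant_diagBlock l) g x y
    · refine sum_congr rfl fun z _ => ?_
      rw [hAk i l hli.symm (g * x) x z z, hBk l i hli z z (g * y) y]
  · obtain rfl | hli := eq_or_ne l i
    · exact (hA.isCirculant_diagBlock l).sum_mul_const_eq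
        (fun z => hBk l j hij z x y y') (fun z => hBk l j hij z x y' y') x x'
    obtain rfl | hlj := eq_or_ne l j
    · exact (hB.isCirculant_diagBlock l).sum_const_mul_eq
        (fun z => hAk i l hij x x z y) (fun z => hAk i l hij x' x z y) y y'
    · refine sum_congr rfl fun z _ => ?_
      rw [hAk i l hli.symm x x' z z, hBk l j hlj z z y y']

end IsJoin

def joinSubring {d : ℕ} (G : Fin d → Type*) [∀ i, Group (G i)] [∀ i, Fintype (G i)]
    [∀ i, DecidableEq (G i)] (R : Type*) [Ring R] :
    Subring (Matrix ((i : Fin d) × G i) ((i : Fin d) × G i) R) where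
  carrier := {A | IsJoin A}
  zero_mem' := IsJoin.zero
  one_mem' := IsJoin.one
  add_mem' := IsJoin.add
  neg_mem' := IsJoin.neg
  mul_mem' := IsJoin.mul

/-- The join of the `G i`-circulant matrices is a unital subring of the full
matrix ring; in particular it is closed under matrix multiplication. -/
theorem isJoin_subring {d : ℕ} (G : Fin d → Type*) [∀ i, Group (G i)]
    [∀ i, Fintype (G i)] [∀ i, DecidableEq (G i)] (R : Type*) [Ring R] :
    ∃ S : Subring (Matrix ((i : Fin d) × G i) ((i : Fin d) × G i) R),
      (S : Set (Matrix ((i : Fin d) × G i) ((i : Fin d) × G i) R)) =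
        {A | IsJoin A} :=
  ⟨joinSubring G R, rfl⟩
end

section
/- The augmentation map ε : J_{G_1,...,G_d}(R) → M_d(R), sending a block matrix A to the d×d matrix whose (i,j) entry is the common row sum of the (i,j) block of A, is a unital ring homomorphism. -/
/-- The augmentation of a join matrix: the `d × d` matrix of row sums of the
blocks (the `(i,j)` entry is the sum of the row of the `(i,j)` block indexed by
the identity of `G i`). -/
def joinAug {d : ℕ} {G : Fin d → Type*} [∀ i, Group (G i)]
    [∀ i, Fintype (G i)] {R : Type*} [Ring R]
    (A : Matrix ((i : Fin d) × G i) ((i : Fin d) × G i) R) :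
    Matrix (Fin d) (Fin d) R :=
  fun i j => ∑ y : G j, A ⟨i, 1⟩ ⟨j, y⟩

section

variable {d : ℕ} {G : Fin d → Type*} [∀ i, Group (G i)] [∀ i, Fintype (G i)]
  {R : Type*} [Ring R]

lemma joinAug_add (A B : Matrix ((i : Fin d) × G i) ((i : Fin d) × G i) R) :
    joinAug (A + B) = joinAug A + joinAug B := by
  ext i j
  simp only [joinAug, Matrix.add_apply, Finset.sum_add_distrib]

lemma joinAug_one [∀ i, DecidableEq (G i)] :
    joinAug (1 : Matrix ((i : Fin d) × G i) ((i : Fin d) × G i) R) = 1 := by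
  ext i j
  rcases eq_or_ne i j with rfl | hij
  · rw [joinAug, Finset.sum_eq_single (1 : G i) (fun y _ hy => by simp [hy.symm])
      (by simp), Matrix.one_apply_eq, Matrix.one_apply_eq]
  · rw [joinAug, Matrix.one_apply_ne hij,
      Finset.sum_eq_zero fun y _ => Matrix.one_apply_ne (by simp [hij])]

lemma IsJoin.sum_row_eq_joinAug {B : Matrix ((i : Fin d) × G i) ((i : Fin d) × G i) R}
    (hB : IsJoin B) (k j : Fin d) (z : G k) :
    ∑ y : G j, B ⟨k, z⟩ ⟨j, y⟩ = joinAug B k j := by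
  rcases eq_or_ne k j with rfl | hkj
  · rw [joinAug, ← Equiv.sum_comp (Equiv.mulLeft z)]
    exact Finset.sum_congr rfl fun y _ => by simpa using hB.1 k z 1 y
  · exact Finset.sum_congr rfl fun y _ => hB.2 k j hkj z 1 y y

lemma joinAug_mul_of_sum_row_eq (A B : Matrix ((i : Fin d) × G i) ((i : Fin d) × G i) R)
    (hB : ∀ k j (z : G k), ∑ y : G j, B ⟨k, z⟩ ⟨j, y⟩ = joinAug B k j) :
    joinAug (A * B) = joinAug A * joinAug B := by
  ext i j
  calc joinAug (A * B) i j
      = ∑ x, A ⟨i, 1⟩ x * ∑ y : G j, B x ⟨j, y⟩ := by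
        simp only [joinAug, Matrix.mul_apply, Finset.mul_sum]
        exact Finset.sum_comm
    _ = ∑ k, ∑ z : G k, A ⟨i, 1⟩ ⟨k, z⟩ * joinAug B k j := by
        rw [← Finset.univ_sigma_univ, Finset.sum_sigma]
        simp only [hB]
    _ = (joinAug A * joinAug B) i j := by
        simp only [joinAug, Matrix.mul_apply, Finset.sum_mul]

end

/-- The augmentation map `ε : J_{G_1,...,G_d}(R) → M_d(R)` is a unital ring
homomorphism: it is additive, multiplicative on the join ring, and sends `1`
to `1`. -/
theorem joinAug_ringHom {d : ℕ} (G : Fin d → Type*) [∀ i, Group (G i)]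
    [∀ i, Fintype (G i)] [∀ i, DecidableEq (G i)] (R : Type*) [Ring R] :
    (∀ A B : Matrix ((i : Fin d) × G i) ((i : Fin d) × G i) R,
      joinAug (A + B) = joinAug A + joinAug B) ∧
    (∀ A B : Matrix ((i : Fin d) × G i) ((i : Fin d) × G i) R,
      IsJoin A → IsJoin B → joinAug (A * B) = joinAug A * joinAug B) ∧
    joinAug (1 : Matrix ((i : Fin d) × G i) ((i : Fin d) × G i) R) = 1 :=
  ⟨joinAug_add, fun A _ _ hB => joinAug_mul_of_sum_row_eq A _ hB.sum_row_eq_joinAug,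
    joinAug_one⟩
end

section
/- The center of J_{G_1,...,G_d}(R) consists exactly of the block-diagonal matrices diag(C_1,...,C_d) with all off-diagonal block coefficients a_{ij} = 0, each C_i lying in the center of R[G_i] (identified with G_i-circulant matrices), and all augmentations equal: ε(C_1) = ε(C_2) = ... = ε(C_d). -/
/-- The `i`-th diagonal block of a join matrix. -/
def diagBlock {d : ℕ} {G : Fin d → Type*} [∀ i, Group (G i)] {R : Type*}
    (A : Matrix ((i : Fin d) × G i) ((i : Fin d) × G i) R) (i : Fin d) :
    Matrix (G i) (G i) R :=
  fun x y => A ⟨i, x⟩ ⟨i, y⟩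

namespace Matrix

variable {ι α : Type*} [Fintype ι] [DecidableEq ι] [NonUnitalNonAssocSemiring α]
  {m n : ι → Type*} {o : Type*}

theorem blockDiagonal'_mul_apply [∀ i, Fintype (n i)] (M : ∀ i, Matrix (m i) (n i) α)
    (B : Matrix (Σ i, n i) o α) (i : ι) (x : m i) (q : o) :
    (blockDiagonal' M * B) ⟨i, x⟩ q = ∑ r, M i x r * B ⟨i, r⟩ q := by
  rw [mul_apply, Fintype.sum_sigma, Fintype.sum_eq_single i]
  · simp only [blockDiagonal'_apply_eq]
  · intro k hk
    exact Finset.sum_eq_zero fun r _ => by rw [blockDiagonal'_apply_ne _ _ _ hk.symm, zero_mul]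

theorem mul_blockDiagonal'_apply [∀ i, Fintype (m i)] (B : Matrix o (Σ i, m i) α)
    (M : ∀ i, Matrix (m i) (n i) α) (q : o) (j : ι) (y : n j) :
    (B * blockDiagonal' M) q ⟨j, y⟩ = ∑ r, B q ⟨j, r⟩ * M j r y := by
  rw [mul_apply, Fintype.sum_sigma, Fintype.sum_eq_single j]
  · simp only [blockDiagonal'_apply_eq]
  · intro k hk
    exact Finset.sum_eq_zero fun r _ => by rw [blockDiagonal'_apply_ne _ _ _ hk, mul_zero]

end Matrix

open Matrix

namespace GCirculant

variable {H R : Type*} [Group H] [Fintype H]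

theorem sum_row_eq [AddCommMonoid R] {C : Matrix H H R} (hC : GCirculant C) (x : H) :
    ∑ y, C x y = ∑ y, C 1 y :=
  Fintype.sum_equiv (Equiv.mulLeft x⁻¹) _ _ fun y => by
    simpa using (hC x⁻¹ x y).symm

theorem sum_col_eq [AddCommMonoid R] {C : Matrix H H R} (hC : GCirculant C) (y : H) :
    ∑ x, C x y = ∑ x, C 1 x :=
  Fintype.sum_equiv (Equiv.inv H |>.trans (Equiv.mulRight y)) _ _ fun x => by
    simpa using (hC x⁻¹ x y).symm

end GCirculant

theorem gCirculant_diagonal_const {H R : Type*} [Group H] [DecidableEq H] [Zero R] (b : R) :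
    GCirculant (diagonal fun _ : H => b) := by
  intro g x y
  simp only [diagonal_apply, mul_right_inj]

theorem gCirculant_zero {H R : Type*} [Group H] [Zero R] : GCirculant (0 : Matrix H H R) :=
  fun _ _ _ => rfl

theorem commute_apply_of_forall_gCirculant {H R : Type*} [Group H] [Fintype H] [DecidableEq H]
    [Ring R] {C : Matrix H H R} (hC : ∀ D, GCirculant D → C * D = D * C) (b : R) (x y : H) :
    Commute b (C x y) := by
  have := congr_fun₂ (hC _ (gCirculant_diagonal_const b)) x y
  rwa [mul_diagonal, diagonal_mul, eq_comm] at this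

section Join

variable {d : ℕ} {G : Fin d → Type*} [∀ i, Group (G i)] {R : Type*}

theorem IsJoin.gCirculant_diagBlock {A : Matrix (Σ i, G i) (Σ i, G i) R} (hA : IsJoin A)
    (i : Fin d) : GCirculant (diagBlock A i) :=
  hA.1 i

theorem isJoin_blockDiagonal' [Zero R] {M : ∀ i, Matrix (G i) (G i) R}
    (hM : ∀ i, GCirculant (M i)) : IsJoin (blockDiagonal' M) := by
  refine ⟨fun i g x y => ?_, fun i j hij x x' y y' => ?_⟩
  · simp only [blockDiagonal'_apply_eq, hM i g x y]
  · rw [blockDiagonal'_apply_ne _ _ _ hij, blockDiagonal'_apply_ne _ _ _ hij]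

theorem isJoin_blockDiagonal'_single [Zero R] (i : Fin d) {D : Matrix (G i) (G i) R}
    (hD : GCirculant D) : IsJoin (blockDiagonal' (Pi.single i D)) := by
  refine isJoin_blockDiagonal' fun k => ?_
  rcases eq_or_ne k i with rfl | hk
  · rwa [Pi.single_eq_same]
  · rw [Pi.single_eq_of_ne hk]
    exact gCirculant_zero

theorem isJoin_const (c : R) : IsJoin (of fun _ _ => c : Matrix (Σ i, G i) (Σ i, G i) R) :=
  ⟨fun _ _ _ _ => rfl, fun _ _ _ _ _ _ _ => rfl⟩

theorem eq_blockDiagonal'_diagBlock [Zero R] {A : Matrix (Σ i, G i) (Σ i, G i) R}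
    (hA : ∀ i j, i ≠ j → ∀ (x : G i) (y : G j), A ⟨i, x⟩ ⟨j, y⟩ = 0) :
    A = blockDiagonal' (diagBlock A) := by
  ext ⟨i, x⟩ ⟨j, y⟩
  rcases eq_or_ne i j with rfl | hij
  · rw [blockDiagonal'_apply_eq]; rfl
  · rw [blockDiagonal'_apply_ne _ _ _ hij, hA i j hij]

end Join

section Center

variable {d : ℕ} {G : Fin d → Type*} [∀ i, Group (G i)] [∀ i, Fintype (G i)]
  {R : Type*} [Ring R] {A : Matrix (Σ i, G i) (Σ i, G i) R}

theorem apply_eq_zero_of_forall_commute (hA : ∀ B, IsJoin B → A * B = B * A) {i j : Fin d}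
    (hij : i ≠ j) (x : G i) (y : G j) : A ⟨i, x⟩ ⟨j, y⟩ = 0 := by
  classical
  have hB := isJoin_blockDiagonal'_single j (gCirculant_diagonal_const (H := G j) (1 : R))
  have := congr_fun₂ (hA _ hB) ⟨i, x⟩ ⟨j, y⟩
  rw [mul_blockDiagonal'_apply, blockDiagonal'_mul_apply, Pi.single_eq_same,
    Pi.single_eq_of_ne hij] at this
  simpa [diagonal_apply] using this

theorem diagBlock_mul_eq_of_forall_commute (hA : ∀ B, IsJoin B → A * B = B * A) (i : Fin d)
    {D : Matrix (G i) (G i) R} (hD : GCirculant D) : diagBlock A i * D = D * diagBlock A i := by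
  ext x y
  have := congr_fun₂ (hA _ (isJoin_blockDiagonal'_single i hD)) ⟨i, x⟩ ⟨i, y⟩
  rwa [mul_blockDiagonal'_apply, blockDiagonal'_mul_apply, Pi.single_eq_same] at this

/-- Commuting with the all-ones join equates the full row sum of `A` at `⟨i, 1⟩` with its
full column sum at `⟨j, 1⟩`; as `A` is block diagonal, these are the augmentations of the
blocks `i` and `j`. -/
theorem sum_diagBlock_eq_of_forall_commute (hJ : IsJoin A)
    (hA : ∀ B, IsJoin B → A * B = B * A) (i j : Fin d) :
    ∑ y : G i, A ⟨i, 1⟩ ⟨i, y⟩ = ∑ y : G j, A ⟨j, 1⟩ ⟨j, y⟩ := by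
  have hdiag := eq_blockDiagonal'_diagBlock fun i j hij => apply_eq_zero_of_forall_commute hA hij
  have := congr_fun₂ (hA _ (isJoin_const 1)) ⟨i, 1⟩ ⟨j, 1⟩
  rw [hdiag, blockDiagonal'_mul_apply, mul_blockDiagonal'_apply] at this
  simp only [of_apply, mul_one, one_mul] at this
  exact this.trans ((hJ.gCirculant_diagBlock j).sum_col_eq 1)

theorem commute_blockDiagonal'_of_isJoin {C : ∀ i, Matrix (G i) (G i) R}
    (hC : ∀ i, GCirculant (C i))
    (hc : ∀ i (D : Matrix (G i) (G i) R), GCirculant D → C i * D = D * C i)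
    (he : ∀ i j, ∑ y, C i 1 y = ∑ y, C j 1 y)
    {B : Matrix (Σ i, G i) (Σ i, G i) R} (hB : IsJoin B) :
    blockDiagonal' C * B = B * blockDiagonal' C := by
  classical
  ext ⟨i, x⟩ ⟨j, y⟩
  rw [blockDiagonal'_mul_apply, mul_blockDiagonal'_apply]
  rcases eq_or_ne i j with rfl | hij
  · exact congr_fun₂ (hc i _ (hB.gCirculant_diagBlock i)) x y
  have hb_central : Commute (B ⟨i, x⟩ ⟨j, y⟩) (∑ r, C j 1 r) :=
    Commute.sum_right _ _ _ fun r _ => commute_apply_of_forall_gCirculant (hc j) _ 1 r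
  calc ∑ r, C i x r * B ⟨i, r⟩ ⟨j, y⟩
      = (∑ r, C i x r) * B ⟨i, x⟩ ⟨j, y⟩ := by
        rw [Finset.sum_mul]
        exact Finset.sum_congr rfl fun r _ => by rw [hB.2 i j hij r x y y]
    _ = (∑ r, C j 1 r) * B ⟨i, x⟩ ⟨j, y⟩ := by rw [(hC i).sum_row_eq x, he i j]
    _ = B ⟨i, x⟩ ⟨j, y⟩ * ∑ r, C j r y := by rw [(hC j).sum_col_eq y, hb_central.eq]
    _ = ∑ r, B ⟨i, x⟩ ⟨j, r⟩ * C j r y := by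
        rw [Finset.mul_sum]
        exact Finset.sum_congr rfl fun r _ => by rw [hB.2 i j hij x x y r]

end Center

/-- A join matrix `A` is in the center of the join ring iff all its
off-diagonal blocks vanish, each diagonal block lies in the center of
`R[G i]` (i.e. commutes with every `G i`-circulant matrix), and all diagonal
blocks have the same augmentation (common row sum). -/
theorem mem_center_join_iff {d : ℕ} {G : Fin d → Type*} [∀ i, Group (G i)]
    [∀ i, Fintype (G i)] {R : Type*} [Ring R]
    (A : Matrix ((i : Fin d) × G i) ((i : Fin d) × G i) R) (hA : IsJoin A) :
    (∀ B : Matrix ((i : Fin d) × G i) ((i : Fin d) × G i) R,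
        IsJoin B → A * B = B * A) ↔
      ((∀ (i j : Fin d), i ≠ j → ∀ (x : G i) (y : G j), A ⟨i, x⟩ ⟨j, y⟩ = 0) ∧
       (∀ (i : Fin d) (D : Matrix (G i) (G i) R), GCirculant D →
          diagBlock A i * D = D * diagBlock A i) ∧
       (∀ i j : Fin d,
          ∑ y : G i, A ⟨i, 1⟩ ⟨i, y⟩ = ∑ y : G j, A ⟨j, 1⟩ ⟨j, y⟩)) := by
  refine ⟨fun h => ⟨fun i j hij => apply_eq_zero_of_forall_commute h hij,
    fun i D hD => diagBlock_mul_eq_of_forall_commute h i hD,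
    sum_diagBlock_eq_of_forall_commute hA h⟩, ?_⟩
  rintro ⟨h0, hc, he⟩ B hB
  rw [eq_blockDiagonal'_diagBlock h0]
  exact commute_blockDiagonal'_of_isJoin hA.gCirculant_diagBlock hc he hB
end

section
/- Let k be a field, d ≥ 2, and G_1,...,G_d finite groups with |G_1| = 0 in k. Then the join algebra J_{G_1,...,G_d}(k) is not a Frobenius algebra: for every k-linear functional λ : J_{G_1,...,G_d}(k) → k, the kernel of λ contains a nonzero left ideal. In particular, J_{G_1,...,G_d}(k) is not isomorphic to the group algebra k[G] of any finite group G. -/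
/-!
For `a : k^d` let `V a` be the block matrix whose rows in block `1` all equal the blockwise
constant row `(a_j)_j` and whose other rows vanish, and let `A` be a join matrix. A row of `A`
outside block `1` is constant on the columns of block `1`, so its product with `V a` is a multiple
of `|G_1| = 0`; the rows of `A` in block `1` all have the same sum `ε(A)` over block `1`, by
circulance. Hence `A * V a = ε(A) • V a`, so `k • V a` is a left ideal; since `a ↦ V a` is
injective on `k^d` and `d ≥ 2`, every functional vanishes on some nonzero `V a`. In `k[H]` the
functional `x ↦ x(1)` has no nonzero left ideal in its kernel, as `(h⁻¹ * x)(1) = x(h)`.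
-/

open Matrix

theorem LinearMap.exists_ne_zero_apply_eq_zero {K V : Type*} [Field K] [AddCommGroup V]
    [Module K V] [FiniteDimensional K V] (hV : 1 < Module.finrank K V) (f : V →ₗ[K] K) :
    ∃ v ≠ 0, f v = 0 := by
  obtain ⟨v, hv, hv0⟩ := Submodule.exists_mem_ne_zero_of_ne_bot <|
    f.ker_ne_bot_of_finrank_lt (by rwa [Module.finrank_self])
  exact ⟨v, hv0, hv⟩

theorem MonoidAlgebra.eq_zero_of_forall_coeff_one_mul_eq_zero {k H : Type*} [Semiring k]
    [Group H] {w : MonoidAlgebra k H} (hw : ∀ x : MonoidAlgebra k H, (x * w).coeff 1 = 0) :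
    w = 0 := by
  ext g
  simpa using hw (single g⁻¹ 1)

theorem AlgEquiv.eq_zero_of_coeff_one_eq_zero_of_forall_mul_eq_smul {k A H : Type*}
    [CommSemiring k] [Semiring A] [Algebra k A] [Group H] (φ : A ≃ₐ[k] MonoidAlgebra k H) {v : A}
    (hv : (φ v).coeff 1 = 0) (hline : ∀ a : A, ∃ c : k, a * v = c • v) : v = 0 := by
  suffices φ v = 0 from (map_eq_zero_iff φ φ.injective).mp this
  refine MonoidAlgebra.eq_zero_of_forall_coeff_one_mul_eq_zero fun x => ?_
  obtain ⟨c, hc⟩ := hline (φ.symm x)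
  calc (x * φ v).coeff 1 = (φ (φ.symm x * v)).coeff 1 := by rw [map_mul, φ.apply_symm_apply]
    _ = c * (φ v).coeff 1 := by rw [hc, map_smul]; rfl
    _ = 0 := by rw [hv, mul_zero]

section Join

variable {d : ℕ} {G : Fin d → Type*} {R : Type*}

namespace IsJoin

variable [∀ i, Group (G i)] [∀ i, Fintype (G i)] [AddCommMonoid R]
  {A : Matrix ((i : Fin d) × G i) ((i : Fin d) × G i) R}

theorem sum_diagBlock_row_eq (hA : IsJoin A) (i : Fin d) (x : G i) :
    ∑ z : G i, A ⟨i, x⟩ ⟨i, z⟩ = ∑ z : G i, A ⟨i, 1⟩ ⟨i, z⟩ := by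
  rw [← Equiv.sum_comp (Equiv.mulLeft x)]
  exact Finset.sum_congr rfl fun z _ => by simpa using hA.1 i x 1 z

theorem sum_offDiagBlock_row_eq (hA : IsJoin A) {i j : Fin d} (hji : j ≠ i) (x : G j) :
    ∑ z : G i, A ⟨j, x⟩ ⟨i, z⟩ = Fintype.card (G i) • A ⟨j, x⟩ ⟨i, 1⟩ := by
  simp [hA.2 j i hji x x _ 1]

end IsJoin

def blockRow [CommSemiring R] (i : Fin d) :
    (Fin d → R) →ₗ[R] Matrix ((j : Fin d) × G j) ((j : Fin d) × G j) R where
  toFun a := of fun p q => if p.1 = i then a q.1 else 0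
  map_add' a b := by ext p q; by_cases h : p.1 = i <;> simp [h]
  map_smul' c a := by ext p q; by_cases h : p.1 = i <;> simp [h]

variable [CommSemiring R]

theorem blockRow_apply (i : Fin d) (a : Fin d → R) (p q : (j : Fin d) × G j) :
    blockRow i a p q = if p.1 = i then a q.1 else 0 := rfl

theorem isJoin_blockRow [∀ j, Group (G j)] (i : Fin d) (a : Fin d → R) :
    IsJoin (blockRow (G := G) i a) :=
  ⟨fun _ _ _ _ => rfl, fun _ _ _ _ _ _ _ => rfl⟩

theorem blockRow_injective [∀ j, One (G j)] (i : Fin d) :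
    Function.Injective (blockRow (G := G) (R := R) i) := fun a b h => by
  funext j
  simpa [blockRow_apply] using congrFun₂ h ⟨i, 1⟩ ⟨j, 1⟩

theorem mul_blockRow_apply [∀ j, Fintype (G j)]
    (A : Matrix ((j : Fin d) × G j) ((j : Fin d) × G j) R) (i : Fin d) (a : Fin d → R)
    (p q : (j : Fin d) × G j) :
    (A * blockRow i a : Matrix _ _ R) p q = (∑ z : G i, A p ⟨i, z⟩) * a q.1 := by
  rw [mul_apply, ← Finset.univ_sigma_univ, Finset.sum_sigma, Finset.sum_eq_single i
    (fun j _ hj => by simp [blockRow_apply, hj]) (by simp), Finset.sum_mul]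
  simp [blockRow_apply]

theorem IsJoin.mul_blockRow [∀ j, Group (G j)] [∀ j, Fintype (G j)]
    {A : Matrix ((j : Fin d) × G j) ((j : Fin d) × G j) R} (hA : IsJoin A) {i : Fin d}
    (hi : (Fintype.card (G i) : R) = 0) (a : Fin d → R) :
    A * blockRow i a = (∑ z : G i, A ⟨i, 1⟩ ⟨i, z⟩) • blockRow i a := by
  ext ⟨j, x⟩ q
  rw [mul_blockRow_apply, Matrix.smul_apply, smul_eq_mul, blockRow_apply]
  by_cases hj : j = i
  · subst hj
    simp [hA.sum_diagBlock_row_eq]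
  · simp [hj, hA.sum_offDiagBlock_row_eq hj, hi]

theorem Subalgebra.exists_ne_zero_mem_ker_forall_mul_eq_smul_of_isJoin {k : Type*} [Field k]
    [∀ j, Group (G j)] [∀ j, Fintype (G j)] [∀ j, DecidableEq (G j)] (hd : 2 ≤ d) {i : Fin d}
    (hi : (Fintype.card (G i) : k) = 0)
    (S : Subalgebra k (Matrix ((j : Fin d) × G j) ((j : Fin d) × G j) k))
    (hjoin : ∀ A ∈ S, IsJoin A) (hrow : ∀ a, blockRow i a ∈ S) (lam : S →ₗ[k] k) :
    ∃ v : S, v ≠ 0 ∧ lam v = 0 ∧ ∀ A : S, ∃ c : k, A * v = c • v := by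
  let V : (Fin d → k) →ₗ[k] S := (blockRow i).codRestrict (Subalgebra.toSubmodule S) hrow
  have hdim : 1 < Module.finrank k (Fin d → k) := by rw [Module.finrank_fin_fun]; omega
  obtain ⟨a, ha, hlam⟩ := (lam ∘ₗ V).exists_ne_zero_apply_eq_zero hdim
  refine ⟨V a, fun h => ha (blockRow_injective (G := G) i ?_), hlam,
    fun A => ⟨_, Subtype.ext ((hjoin A A.2).mul_blockRow hi a)⟩⟩
  rw [map_zero]
  exact congrArg Subtype.val h

end Join

/-- Let `k` be a field, `d ≥ 2`, and `|G_1| = 0` in `k`. Then the join algebra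
`J_{G_1,...,G_d}(k)` is not Frobenius: the kernel of every `k`-linear
functional on it contains a nonzero left ideal (here, the span of a nonzero
element `v` with `A * v ∈ k·v` for all `A` in the join algebra). In
particular, the join algebra is not isomorphic to the group algebra of any
finite group. -/
theorem join_not_frobenius {d : ℕ} (hd : 2 ≤ d) (G : Fin d → Type*)
    [∀ i, Group (G i)] [∀ i, Fintype (G i)] [∀ i, DecidableEq (G i)]
    (k : Type*) [Field k]
    (hG1 : ((Fintype.card (G ⟨0, by omega⟩) : k) = 0))
    (S : Subalgebra k (Matrix ((i : Fin d) × G i) ((i : Fin d) × G i) k))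
    (hS : (S : Set (Matrix ((i : Fin d) × G i) ((i : Fin d) × G i) k)) =
      {A | IsJoin A}) :
    (∀ lam : S →ₗ[k] k, ∃ v : S, v ≠ 0 ∧ lam v = 0 ∧
      ∀ A : S, ∃ c : k,
        ((A * v : S) : Matrix ((i : Fin d) × G i) ((i : Fin d) × G i) k) =
          c • (v : Matrix ((i : Fin d) × G i) ((i : Fin d) × G i) k)) ∧
    (∀ (H : Type*) [Group H] [Fintype H],
      IsEmpty (S ≃ₐ[k] MonoidAlgebra k H)) := by
  have hmem : ∀ A, A ∈ S ↔ IsJoin A := fun A => by rw [← SetLike.mem_coe, hS]; rfl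
  have key := S.exists_ne_zero_mem_ker_forall_mul_eq_smul_of_isJoin hd hG1
    (fun A => (hmem A).mp) (fun a => (hmem _).mpr (isJoin_blockRow _ a))
  refine ⟨fun lam => ?_, fun H _ _ => ⟨fun φ => ?_⟩⟩
  · obtain ⟨v, hv0, hlam, hline⟩ := key lam
    exact ⟨v, hv0, hlam, fun A => (hline A).imp fun c hc => congrArg Subtype.val hc⟩
  · obtain ⟨v, hv0, hlam, hline⟩ := key <|
      Finsupp.lapply 1 ∘ₗ (MonoidAlgebra.coeffLinearEquiv k).toLinearMap ∘ₗ φ.toLinearMap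
    exact hv0 (φ.eq_zero_of_coeff_one_eq_zero_of_forall_mul_eq_smul hlam hline)
end
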